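/- arXiv:2209.07625 — 4 statements merged into one kernel-verified Lean document; each statement's English description precedes it below -/
import Mathlib

section
/- In the hypercube {0,1}^m with Hamming distance, any set of pairwise equidistant points (all pairwise distances equal to some fixed d > 0) has at most m+1 elements. -/
/-!
Send `x ∈ {0,1}^m` to its indicator vector in `ℝ^m`; the Euclidean distance between two images is
the square root of the Hamming distance, so `S` becomes an equilateral set in Euclidean space.
Seen from one of its points `p₀`, the other points of an equilateral set with side `r` give
vectors with Gram matrix `(r²/2)(I + J)`, which is positive definite; so these vectors are linearly
independent, the set is affinely independent, and it has at most `m + 1` points.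
-/

open Finset Module

section Equilateral

variable {V P : Type*} [NormedAddCommGroup V] [InnerProductSpace ℝ V] [MetricSpace P]
  [NormedAddTorsor V P]

theorem linearIndependent_of_inner_eq {ι : Type*} [DecidableEq ι] {v : ι → V} {a b : ℝ}
    (ha : 0 ≤ a) (hb : 0 < b) (h : ∀ i j, inner ℝ (v i) (v j) = a + if i = j then b else 0) :
    LinearIndependent ℝ v := by
  rw [linearIndependent_iff']
  intro s g hg
  have hnorm : inner ℝ (∑ i ∈ s, g i • v i) (∑ j ∈ s, g j • v j)
      = a * (∑ i ∈ s, g i) ^ 2 + b * ∑ i ∈ s, g i ^ 2 := by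
    simp only [sum_inner, inner_sum, real_inner_smul_left, real_inner_smul_right, h]
    calc _ = ∑ i ∈ s, ∑ j ∈ s, (a * (g i * g j) + if i = j then b * g i ^ 2 else 0) := by
          refine sum_congr rfl fun i _ => sum_congr rfl fun j _ => ?_
          by_cases hij : i = j <;> simp [hij, Ne.symm] <;> ring
      _ = _ := by
          simp only [sum_add_distrib, ← mul_sum, sum_ite_eq, sum_ite_mem, inter_self, sq,
            sum_mul_sum]
  have hsq : ∑ i ∈ s, g i ^ 2 = 0 := by
    rw [hg, inner_zero_left] at hnorm
    nlinarith [sum_nonneg fun i (_ : i ∈ s) => sq_nonneg (g i), sq_nonneg (∑ i ∈ s, g i)]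
  intro i hi
  exact pow_eq_zero_iff two_ne_zero |>.mp <|
    (sum_eq_zero_iff_of_nonneg fun j _ => sq_nonneg (g j)).mp hsq i hi

theorem affineIndependent_of_dist_eq {ι : Type*} {p : ι → P} {r : ℝ} (hr : 0 < r)
    (h : ∀ i j, i ≠ j → dist (p i) (p j) = r) : AffineIndependent ℝ p := by
  classical
  rcases isEmpty_or_nonempty ι with _ | ⟨⟨i₀⟩⟩
  · exact affineIndependent_of_subsingleton ℝ p
  rw [affineIndependent_iff_linearIndependent_vsub ℝ p i₀]
  refine linearIndependent_of_inner_eq (a := r ^ 2 / 2) (b := r ^ 2 / 2) (by positivity)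
    (by positivity) fun i j => ?_
  rw [real_inner_eq_norm_mul_self_add_norm_mul_self_sub_norm_sub_mul_self_div_two,
    vsub_sub_vsub_cancel_right, ← dist_eq_norm_vsub, ← dist_eq_norm_vsub, ← dist_eq_norm_vsub,
    h _ _ i.2, h _ _ j.2]
  by_cases hij : i = j
  · rw [if_pos hij, hij, dist_self]
    ring
  · rw [if_neg hij, h _ _ (Subtype.coe_ne_coe.mpr hij)]
    ring

theorem Finset.card_le_finrank_add_one_of_dist_eq [FiniteDimensional ℝ V] {S : Finset P} {r : ℝ}
    (h : ∀ x ∈ S, ∀ y ∈ S, x ≠ y → dist x y = r) : #S ≤ finrank ℝ V + 1 := by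
  rcases le_or_gt #S 1 with hS | hS
  · omega
  obtain ⟨x, hx, y, hy, hxy⟩ := one_lt_card.mp hS
  have hr : 0 < r := h x hx y hy hxy ▸ dist_pos.mpr hxy
  have hind : AffineIndependent ℝ ((↑) : S → P) :=
    affineIndependent_of_dist_eq hr fun i j hij => h _ i.2 _ j.2 (Subtype.coe_ne_coe.mpr hij)
  calc #S = Fintype.card S := (Fintype.card_coe S).symm
    _ ≤ finrank ℝ (vectorSpan ℝ (Set.range ((↑) : S → P))) + 1 := hind.card_le_finrank_succ
    _ ≤ finrank ℝ V + 1 := by gcongr; exact Submodule.finrank_le _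

end Equilateral

section HammingCube

variable {ι : Type*}

noncomputable def boolToEuclidean (x : ι → Bool) : EuclideanSpace ℝ ι :=
  WithLp.toLp 2 fun i => if x i then 1 else 0

theorem boolToEuclidean_injective : Function.Injective (boolToEuclidean (ι := ι)) := by
  intro x y hxy
  funext i
  have hi := congrFun (congrArg WithLp.ofLp hxy) i
  cases hx : x i <;> cases hy : y i <;> simp [boolToEuclidean, hx, hy] at hi ⊢

theorem dist_boolToEuclidean [Fintype ι] (x y : ι → Bool) :
    dist (boolToEuclidean x) (boolToEuclidean y) = √(hammingDist x y) := by
  classical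
  rw [EuclideanSpace.dist_eq, hammingDist, natCast_card_filter]
  congr 1
  refine sum_congr rfl fun i _ => ?_
  cases hx : x i <;> cases hy : y i <;> simp [boolToEuclidean, hx, hy, Real.dist_eq]

end HammingCube

theorem hypercube_equidistant_card_le_general (m d : ℕ)
    (S : Finset (Fin m → Bool))
    (h : ∀ x ∈ S, ∀ y ∈ S, x ≠ y → hammingDist x y = d) :
    S.card ≤ m + 1 := by
  have hequilateral : ∀ p ∈ S.image boolToEuclidean, ∀ q ∈ S.image boolToEuclidean, p ≠ q →
      dist p q = √d := by
    simp only [mem_image]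
    rintro _ ⟨x, hx, rfl⟩ _ ⟨y, hy, rfl⟩ hxy
    rw [dist_boolToEuclidean, h x hx y hy (ne_of_apply_ne _ hxy)]
  calc S.card = (S.image boolToEuclidean).card :=
        (card_image_of_injective S boolToEuclidean_injective).symm
    _ ≤ finrank ℝ (EuclideanSpace ℝ (Fin m)) + 1 := card_le_finrank_add_one_of_dist_eq hequilateral
    _ = m + 1 := by rw [finrank_euclideanSpace_fin]

theorem hypercube_equidistant_card_le (m d : ℕ) (hd : 0 < d)
    (S : Finset (Fin m → Bool))
    (h : ∀ x ∈ S, ∀ y ∈ S, x ≠ y → hammingDist x y = d) :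
    S.card ≤ m + 1 :=
  hypercube_equidistant_card_le_general m d S h
end

section
/- Let G be the complete graph on r^{rn} vertices whose edges are each colored with one of r colors (r ≥ 2, n ≥ 1). Then G contains a monochromatic clique of size n. -/
open Finset

lemma ramsey_aux (r : ℕ) (hr : 2 ≤ r) {V : Type*} [DecidableEq V] (c : V → V → Fin r)
    (m : ℕ) (S : Finset V) (h : r ^ m ≤ S.card) :
    ∃ (v : Fin m → V) (i : Fin m → Fin r),
      (∀ j, v j ∈ S) ∧ Function.Injective v ∧
      ∀ j j' : Fin m, j < j' → c (v j) (v j') = i j := by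
  induction m generalizing S with
  | zero =>
    exact ⟨fun j => j.elim0, fun j => j.elim0, fun j => j.elim0,
      fun j => j.elim0, fun j => j.elim0⟩
  | succ m ih =>
    have hpos : 0 < S.card := lt_of_lt_of_le (pow_pos (by omega) _) h
    obtain ⟨v0, hv0⟩ := Finset.card_pos.mp hpos
    have hrm : 1 ≤ r ^ m := Nat.one_le_pow _ _ (by omega)
    have hcard : r * (r ^ m - 1) < (S.erase v0).card := by
      have e1 : r * r ^ m ≤ S.card := by rw [← pow_succ']; exact h
      have e2 : r ≤ r * r ^ m := Nat.le_mul_of_pos_right r hrm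
      have e3 : r * (r ^ m - 1) = r * r ^ m - r := by rw [Nat.mul_sub, mul_one]
      rw [Finset.card_erase_of_mem hv0]
      omega
    obtain ⟨k, -, hk⟩ := Finset.exists_lt_card_fiber_of_mul_lt_card_of_maps_to
      (f := fun y => c v0 y) (t := (Finset.univ : Finset (Fin r)))
      (fun a _ => Finset.mem_univ _) (by simpa using hcard)
    set T : Finset V := (S.erase v0).filter (fun y => c v0 y = k) with hT
    have hk' : r ^ m ≤ T.card := by omega
    obtain ⟨v, i, hmem, hinj, hcol⟩ := ih T hk'
    have hmemT : ∀ j, v j ∈ S.erase v0 ∧ c v0 (v j) = k := by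
      intro j
      have := hmem j
      rw [hT, Finset.mem_filter] at this
      exact this
    refine ⟨Fin.cases v0 v, Fin.cases k i, ?_, ?_, ?_⟩
    · intro j
      induction j using Fin.cases with
      | zero => simpa using hv0
      | succ a => simpa using Finset.mem_of_mem_erase (hmemT a).1
    · intro a b hab
      induction a using Fin.cases with
      | zero =>
        induction b using Fin.cases with
        | zero => rfl
        | succ b' =>
          exfalso
          simp only [Fin.cases_zero, Fin.cases_succ] at hab
          exact (Finset.ne_of_mem_erase (hmemT b').1) hab.symm
      | succ a' =>
        induction b using Fin.cases with
        | zero =>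
          exfalso
          simp only [Fin.cases_zero, Fin.cases_succ] at hab
          exact (Finset.ne_of_mem_erase (hmemT a').1) hab
        | succ b' =>
          simp only [Fin.cases_succ] at hab
          exact congrArg Fin.succ (hinj hab)
    · intro j j' hjj'
      induction j using Fin.cases with
      | zero =>
        induction j' using Fin.cases with
        | zero => exact absurd hjj' (lt_irrefl _)
        | succ b' =>
          simp only [Fin.cases_zero, Fin.cases_succ]
          exact (hmemT b').2
      | succ a' =>
        induction j' using Fin.cases with
        | zero => exact absurd hjj' (Fin.not_lt_zero _)
        | succ b' =>
          simp only [Fin.cases_succ]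
          exact hcol a' b' (Fin.succ_lt_succ_iff.mp hjj')

theorem multicolor_ramsey (r n : ℕ) (hr : 2 ≤ r) (hn : 1 ≤ n)
    (c : Fin (r ^ (r * n)) → Fin (r ^ (r * n)) → Fin r)
    (hsym : ∀ x y, c x y = c y x) :
    ∃ S : Finset (Fin (r ^ (r * n))), S.card = n ∧
      ∃ col : Fin r, ∀ x ∈ S, ∀ y ∈ S, x ≠ y → c x y = col := by
  obtain ⟨v, i, hmem, hinj, hcol⟩ := ramsey_aux r hr c (r * n)
    (Finset.univ : Finset (Fin (r ^ (r * n)))) (by simp)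
  obtain ⟨col, -, hcolcard⟩ := Finset.exists_le_card_fiber_of_mul_le_card_of_maps_to
    (s := (Finset.univ : Finset (Fin (r * n)))) (f := i)
    (t := (Finset.univ : Finset (Fin r)))
    (n := n) (fun a _ => Finset.mem_univ _)
    ⟨⟨0, by omega⟩, Finset.mem_univ _⟩
    (by simp)
  obtain ⟨F, hFsub, hFcard⟩ := Finset.exists_subset_card_eq hcolcard
  refine ⟨F.image v, ?_, col, ?_⟩
  · rw [Finset.card_image_of_injective _ hinj, hFcard]
  · intro x hx y hy hxy
    obtain ⟨a, haF, rfl⟩ := Finset.mem_image.mp hx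
    obtain ⟨b, hbF, rfl⟩ := Finset.mem_image.mp hy
    have ha : i a = col := (Finset.mem_filter.mp (hFsub haF)).2
    have hb : i b = col := (Finset.mem_filter.mp (hFsub hbF)).2
    have hab : a ≠ b := fun h => hxy (by rw [h])
    rcases lt_or_gt_of_ne hab with h | h
    · rw [hcol a b h, ha]
    · rw [hsym, hcol b a h, hb]
end

section
/- Let U be a finite set with |U| = 2^n, and for each 0 ≤ i ≤ n-2 let P_i : U^{i+2} → {0,1} be arbitrary functions. Then there exists a sequence of n+1 distinct elements a_0, ..., a_n of U such that for every i ≤ n-2 and every j > i, the value P_i(a_0, ..., a_i, a_j) is the same (depends only on i). -/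
/-!
Induct on `m`, choosing `a₀, …, aₘ` from any finite set `S` with `|S| ≥ 2 ^ m`. Take any `x ∈ S`
as `a₀`: the predicate `P₀ (x, ·)` splits the other `|S| - 1 ≥ 2 ^ m - 1` elements into two classes,
one of size at least `2 ^ (m - 1)`. Confining `a₁, …, aₘ` to that class makes `P₀` constant on them,
and the remaining predicates, with `x` fixed as their first argument, form an instance of the same
problem one size smaller.
-/

open Finset Function

variable {U : Type}

def IsLongChoiceCertificate (P : ∀ i : ℕ, (Fin (i + 1) → U) → U → Bool) {m : ℕ}
    (a : Fin (m + 1) → U) : Prop :=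
  ∀ i j k : Fin (m + 1), i < j → i < k →
    P i (a ∘ Fin.castLE i.isLt) (a j) = P i (a ∘ Fin.castLE i.isLt) (a k)

theorem Finset.exists_le_card_filter_bool_eq {α : Type*} (s : Finset α) (f : α → Bool) {n : ℕ}
    (hn : 2 * n ≤ #s + 1) : ∃ b, n ≤ #{x ∈ s | f x = b} := by
  rcases Nat.eq_zero_or_pos n with rfl | hpos
  · exact ⟨true, Nat.zero_le _⟩
  obtain ⟨b, -, hb⟩ := exists_lt_card_fiber_of_mul_lt_card_of_maps_to (s := s) (t := univ)
    (n := n - 1) (fun a _ => mem_univ (f a)) (by rw [card_univ, Fintype.card_bool]; omega)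
  exact ⟨b, by omega⟩

theorem IsLongChoiceCertificate.cons {P : ∀ i : ℕ, (Fin (i + 1) → U) → U → Bool} {m : ℕ}
    {x : U} {c : Fin (m + 1) → U}
    (hc : IsLongChoiceCertificate (fun i pre => P (i + 1) (Fin.cons x pre)) c) {b : Bool}
    (hb : ∀ j, P 0 ![x] (c j) = b) :
    IsLongChoiceCertificate P (Fin.cons x c : Fin (m + 2) → U) := by
  intro i j k hij hik
  obtain ⟨j, rfl⟩ := Fin.exists_succ_eq.mpr (Fin.ne_zero_of_lt hij)
  obtain ⟨k, rfl⟩ := Fin.exists_succ_eq.mpr (Fin.ne_zero_of_lt hik)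
  induction i using Fin.cases with
  | zero =>
    have hpre : (Fin.cons x c : Fin (m + 2) → U) ∘ Fin.castLE (Fin.isLt 0) = ![x] := by
      funext t
      exact Fin.cases rfl (fun t => t.elim0) t
    simp only [Fin.cons_succ]
    rw [hpre]
    exact (hb j).trans (hb k).symm
  | succ i =>
    have hpre : (Fin.cons x c : Fin (m + 2) → U) ∘ Fin.castLE i.succ.isLt =
        Fin.cons x (c ∘ Fin.castLE i.isLt) := by
      funext t
      exact Fin.cases rfl (fun _ => rfl) t
    simp only [Fin.val_succ, hpre, Fin.cons_succ]
    exact hc i j k (Fin.succ_lt_succ_iff.mp hij) (Fin.succ_lt_succ_iff.mp hik)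

theorem exists_injective_isLongChoiceCertificate [DecidableEq U] (m : ℕ) (S : Finset U)
    (hS : 2 ^ m ≤ #S) (P : ∀ i : ℕ, (Fin (i + 1) → U) → U → Bool) :
    ∃ a : Fin (m + 1) → U, Injective a ∧ (∀ j, a j ∈ S) ∧ IsLongChoiceCertificate P a := by
  induction m generalizing S P with
  | zero =>
    obtain ⟨x, hx⟩ := card_pos.mp (by simpa using hS)
    exact ⟨fun _ => x, injective_of_subsingleton (α := Fin 1) _, fun _ => hx,
      fun i j _ hij => absurd hij (by omega)⟩
  | succ m ih =>
    obtain ⟨x, hx⟩ := card_pos.mp (lt_of_lt_of_le (by positivity) hS)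
    obtain ⟨b, hb⟩ := (S.erase x).exists_le_card_filter_bool_eq (P 0 ![x]) (n := 2 ^ m)
      (by rw [card_erase_of_mem hx, pow_succ] at *; omega)
    obtain ⟨c, hc_inj, hcT, hc⟩ := ih _ hb fun i pre => P (i + 1) (Fin.cons x pre)
    simp only [mem_filter, mem_erase] at hcT
    refine ⟨Fin.cons x c, Fin.cons_injective_of_injective ?_ hc_inj, ?_,
      hc.cons fun j => (hcT j).2⟩
    · rintro ⟨j, hj⟩
      exact (hcT j).1.1 hj
    · exact Fin.cases hx fun j => (hcT j).1.2

theorem longChoice_total {n : ℕ} {U : Type} [Fintype U]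
    (hU : Fintype.card U = 2 ^ n)
    (P : ∀ i : Fin (n - 1), (Fin (i.1 + 1) → U) → U → Bool) :
    ∃ a : Fin (n + 1) → U, Function.Injective a ∧
      ∀ (i : Fin (n - 1)) (j k : Fin (n + 1)), i.1 < j.1 → i.1 < k.1 →
        P i (fun t => a ⟨t.1, by have := t.isLt; have := i.isLt; omega⟩) (a j) =
        P i (fun t => a ⟨t.1, by have := t.isLt; have := i.isLt; omega⟩) (a k) := by
  classical
  -- `Q (n - 1)` is arbitrary: it is never constrained, as only `j = k = n` exceed `n - 1`.
  let Q : ∀ i : ℕ, (Fin (i + 1) → U) → U → Bool := fun i =>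
    if h : i < n - 1 then P ⟨i, h⟩ else fun _ _ => true
  obtain ⟨a, ha_inj, -, ha⟩ :=
    exists_injective_isLongChoiceCertificate n univ (by rw [card_univ, hU]) Q
  refine ⟨a, ha_inj, fun i j k hij hik => ?_⟩
  have := ha ⟨i, by omega⟩ j k hij hik
  simp only [Q, dif_pos i.isLt] at this
  exact this
end

section
/- Let U be a finite set with |U| = 2^n - 2, and for each 0 ≤ i ≤ n-2 let P_i : U^{i+2} → {0,1} be arbitrary functions. Then there exists k ≤ n-2, a sequence of distinct elements a_0, ..., a_k of U satisfying the Long Choice condition (for each i < k and all j with i < j ≤ k, P_i(a_0,...,a_i,a_j) is constant in j), and a bit c ∈ {0,1}, such that no element x of U extends the sequence to a valid Long Choice sequence a_0, ..., a_k, x with P_k(a_0, ..., a_k, x) = c. -/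
open scoped Classical

namespace ShortChoiceAux

variable {n : ℕ} {U : Type} [Fintype U]

/-- restriction of a sequence to its first `m+1` entries -/
def res {k : ℕ} (a : Fin (k + 1) → U) (m : ℕ) (hm : m < k + 1) : Fin (m + 1) → U :=
  fun t => a ⟨t.1, by have := t.isLt; omega⟩

def seqValid (P : ∀ i : Fin (n - 1), (Fin (i.1 + 1) → U) → U → Bool)
    (k : ℕ) (hk : k ≤ n - 2) (a : Fin (k + 1) → U) : Prop :=
  Function.Injective a ∧
    ∀ i j : Fin (k + 1), (hij : i.1 < j.1) →
      P ⟨i.1, by have := j.isLt; omega⟩ (res a i.1 i.isLt) (a j) =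
      P ⟨i.1, by have := j.isLt; omega⟩ (res a i.1 i.isLt)
        (a ⟨i.1 + 1, by have := j.isLt; omega⟩)

def extOK (P : ∀ i : Fin (n - 1), (Fin (i.1 + 1) → U) → U → Bool)
    (k : ℕ) (hk : k ≤ n - 2) (a : Fin (k + 1) → U) (x : U) : Prop :=
  (∀ i : Fin (k + 1), x ≠ a i) ∧
    ∀ i : Fin k,
      P ⟨i.1, by have := i.isLt; omega⟩ (res a i.1 (by have := i.isLt; omega)) x =
      P ⟨i.1, by have := i.isLt; omega⟩ (res a i.1 (by have := i.isLt; omega))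
        (a ⟨i.1 + 1, by have := i.isLt; omega⟩)

noncomputable def Sfin (P : ∀ i : Fin (n - 1), (Fin (i.1 + 1) → U) → U → Bool)
    (k : ℕ) (hk : k ≤ n - 2) (a : Fin (k + 1) → U) : Finset U :=
  Finset.univ.filter (extOK P k hk a)

lemma mem_Sfin {P : ∀ i : Fin (n - 1), (Fin (i.1 + 1) → U) → U → Bool}
    {k : ℕ} {hk : k ≤ n - 2} {a : Fin (k + 1) → U} {x : U} :
    x ∈ Sfin P k hk a ↔ extOK P k hk a x := by
  simp [Sfin]

lemma snoc_mk_lt {k : ℕ} (a : Fin (k + 1) → U) (x0 : U) {t : ℕ} (h : t < k + 2)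
    (h' : t < k + 1) : (Fin.snoc a x0 : Fin (k + 2) → U) ⟨t, h⟩ = a ⟨t, h'⟩ := by
  have e : (⟨t, h⟩ : Fin (k + 2)) = Fin.castSucc ⟨t, h'⟩ := rfl
  rw [e, Fin.snoc_castSucc]

lemma snoc_mk_last {k : ℕ} (a : Fin (k + 1) → U) (x0 : U) (h : k + 1 < k + 2) :
    (Fin.snoc a x0 : Fin (k + 2) → U) ⟨k + 1, h⟩ = x0 := by
  have e : (⟨k + 1, h⟩ : Fin (k + 2)) = Fin.last (k + 1) := rfl
  rw [e, Fin.snoc_last]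

lemma res_snoc {k : ℕ} (a : Fin (k + 1) → U) (x0 : U) (m : ℕ) (hm : m < k + 2)
    (hm' : m < k + 1) : res (Fin.snoc a x0) m hm = res a m hm' := by
  funext t
  exact snoc_mk_lt a x0 _ _

lemma step (P : ∀ i : Fin (n - 1), (Fin (i.1 + 1) → U) → U → Bool)
    {k : ℕ} (hk1 : k + 1 ≤ n - 2) {a : Fin (k + 1) → U}
    (ha : seqValid P k (by omega) a) {x0 : U} (hx0 : extOK P k (by omega) a x0) :
    seqValid P (k + 1) hk1 (Fin.snoc a x0) ∧
      ∀ x : U, extOK P (k + 1) hk1 (Fin.snoc a x0) x →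
        extOK P k (by omega) a x ∧ x ≠ x0 ∧
          P ⟨k, by omega⟩ a x = P ⟨k, by omega⟩ a x0 := by
  constructor
  · refine ⟨?_, ?_⟩
    · -- injectivity of the extended sequence
      rintro ⟨iv, hi⟩ ⟨jv, hj⟩ hij
      by_cases hik : iv < k + 1 <;> by_cases hjk : jv < k + 1
      · rw [snoc_mk_lt a x0 hi hik, snoc_mk_lt a x0 hj hjk] at hij
        have := congrArg Fin.val (ha.1 hij)
        exact Fin.ext this
      · have hjv : jv = k + 1 := by omega
        have e2 : (Fin.snoc a x0 : Fin (k + 2) → U) ⟨jv, hj⟩ = x0 := by subst hjv; exact snoc_mk_last a x0 hj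
        rw [snoc_mk_lt a x0 hi hik, e2] at hij
        exact absurd hij.symm (hx0.1 ⟨iv, hik⟩)
      · have hiv : iv = k + 1 := by omega
        have e2 : (Fin.snoc a x0 : Fin (k + 2) → U) ⟨iv, hi⟩ = x0 := by subst hiv; exact snoc_mk_last a x0 hi
        rw [snoc_mk_lt a x0 hj hjk, e2] at hij
        exact absurd hij (hx0.1 ⟨jv, hjk⟩)
      · exact Fin.ext (show iv = jv by omega)
    · -- the constancy condition
      rintro ⟨iv, hi⟩ ⟨jv, hj⟩ hij
      have hij' : iv < jv := hij
      have hik : iv < k + 1 := by omega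
      rw [res_snoc a x0 iv hi hik]
      by_cases hjk : jv < k + 1
      · rw [snoc_mk_lt a x0 hj hjk, snoc_mk_lt a x0 _ (show iv + 1 < k + 1 by omega)]
        exact ha.2 ⟨iv, hik⟩ ⟨jv, hjk⟩ hij'
      · have hjv : jv = k + 1 := by omega
        have e : (Fin.snoc a x0 : Fin (k + 2) → U) ⟨jv, hj⟩ = x0 := by subst hjv; exact snoc_mk_last a x0 hj
        rw [e]
        by_cases hik' : iv < k
        · rw [snoc_mk_lt a x0 _ (show iv + 1 < k + 1 by omega)]
          exact hx0.2 ⟨iv, hik'⟩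
        · have hiv : iv = k := by omega
          subst hiv
          rw [snoc_mk_last a x0 (by omega)]
  · intro x hx
    refine ⟨⟨?_, ?_⟩, ?_, ?_⟩
    · intro i
      have h := hx.1 ⟨i.1, by omega⟩
      rw [snoc_mk_lt a x0 _ i.isLt] at h
      exact h
    · intro i
      have h := hx.2 ⟨i.1, by omega⟩
      rw [res_snoc a x0 i.1 (by omega) (by omega),
        snoc_mk_lt a x0 _ (show i.1 + 1 < k + 1 by omega)] at h
      exact h
    · have h := hx.1 ⟨k + 1, by omega⟩
      rw [snoc_mk_last a x0 (by omega)] at h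
      exact h
    · have h := hx.2 ⟨k, by omega⟩
      rw [res_snoc a x0 k (by omega) (by omega), snoc_mk_last a x0 (by omega)] at h
      have hres : res a k (by omega) = a := funext fun t => rfl
      rw [hres] at h
      exact h

def Concl {n : ℕ} (hn : 2 ≤ n) {U : Type} [Fintype U]
    (P : ∀ i : Fin (n - 1), (Fin (i.1 + 1) → U) → U → Bool) : Prop :=
  ∃ k : ℕ, ∃ hk : k ≤ n - 2, ∃ a : Fin (k + 1) → U, Function.Injective a ∧
    (∀ i j : Fin (k + 1), (hij : i.1 < j.1) →
      P ⟨i.1, by have := i.isLt; omega⟩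
        (fun t => a ⟨t.1, by have h1 : (t : ℕ) < (i : ℕ) + 1 := t.isLt; have := i.isLt; omega⟩) (a j) =
      P ⟨i.1, by have := i.isLt; omega⟩
        (fun t => a ⟨t.1, by have h1 : (t : ℕ) < (i : ℕ) + 1 := t.isLt; have := i.isLt; omega⟩)
        (a ⟨i.1 + 1, by have := j.isLt; omega⟩)) ∧
    ∃ c : Bool, ∀ x : U, (∀ i : Fin (k + 1), x ≠ a i) →
      (∀ i : Fin k,
        P ⟨i.1, by have := i.isLt; omega⟩
          (fun t => a ⟨t.1, by have h1 : (t : ℕ) < (i : ℕ) + 1 := t.isLt; have := i.isLt; omega⟩) x =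
        P ⟨i.1, by have := i.isLt; omega⟩
          (fun t => a ⟨t.1, by have h1 : (t : ℕ) < (i : ℕ) + 1 := t.isLt; have := i.isLt; omega⟩)
          (a ⟨i.1 + 1, by have := i.isLt; omega⟩)) →
      P ⟨k, by omega⟩ a x ≠ c

lemma concl_of (hn : 2 ≤ n) (P : ∀ i : Fin (n - 1), (Fin (i.1 + 1) → U) → U → Bool)
    (k : ℕ) (hk : k ≤ n - 2) (a : Fin (k + 1) → U) (hv : seqValid P k hk a) (c : Bool)
    (hc : ∀ x : U, extOK P k hk a x → P ⟨k, by omega⟩ a x ≠ c) : Concl hn P :=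
  ⟨k, hk, a, hv.1, hv.2, c, fun x h1 h2 => hc x ⟨h1, h2⟩⟩

lemma key (hn : 2 ≤ n) (hU : Fintype.card U = 2 ^ n - 2)
    (P : ∀ i : Fin (n - 1), (Fin (i.1 + 1) → U) → U → Bool) :
    ∀ (m k : ℕ) (hmk : k + m = n - 2) (a : Fin (k + 1) → U),
      seqValid P k (by omega) a → (Sfin P k (by omega) a).card ≤ 2 ^ (m + 2) - 3 →
      Concl hn P := by
  intro m
  induction m with
  | zero =>
    intro k hmk a hval hcard
    by_cases hc : ∃ c : Bool, ∀ x : U, extOK P k (by omega) a x → P ⟨k, by omega⟩ a x ≠ c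
    · obtain ⟨c, hc⟩ := hc
      exact concl_of hn P k (by omega) a hval c hc
    · exfalso
      push_neg at hc
      obtain ⟨xt, hxt, hxt2⟩ := hc true
      obtain ⟨xf, hxf, hxf2⟩ := hc false
      have hne : xt ≠ xf := by
        intro h
        rw [h, hxf2] at hxt2
        exact Bool.false_ne_true hxt2
      have hsub : ({xt, xf} : Finset U) ⊆ Sfin P k (by omega) a := by
        intro y hy
        rcases Finset.mem_insert.mp hy with h | h
        · subst h; exact mem_Sfin.mpr hxt
        · rw [Finset.mem_singleton] at h; subst h; exact mem_Sfin.mpr hxf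
      have h2 := Finset.card_le_card hsub
      rw [Finset.card_pair hne] at h2
      norm_num at hcard
      omega
  | succ m ih =>
    intro k hmk a hval hcard
    by_cases hc : ∃ c : Bool, ∀ x : U, extOK P k (by omega) a x → P ⟨k, by omega⟩ a x ≠ c
    · obtain ⟨c, hc⟩ := hc
      exact concl_of hn P k (by omega) a hval c hc
    · push_neg at hc
      have hk1 : k + 1 ≤ n - 2 := by omega
      set S : Finset U := Sfin P k (by omega) a with hS
      set f : U → Bool := fun x => P ⟨k, by omega⟩ a x with hf
      have hsplit : (S.filter (fun x => f x = true)).card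
          + (S.filter (fun x => f x = false)).card = S.card := by
        have h1 := Finset.card_filter_add_card_filter_not
          (s := S) (p := fun x => f x = true)
        have h2 : S.filter (fun x => ¬ (f x = true)) = S.filter (fun x => f x = false) := by
          apply Finset.filter_congr
          intro x _
          simp [Bool.not_eq_true]
        rw [h2] at h1
        exact h1
      obtain ⟨b, hbmin⟩ : ∃ b : Bool, 2 * (S.filter (fun x => f x = b)).card ≤ S.card := by
        rcases le_total ((S.filter (fun x => f x = true)).card)
          ((S.filter (fun x => f x = false)).card) with h | h
        · exact ⟨true, by omega⟩
        · exact ⟨false, by omega⟩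
      obtain ⟨x0, hx0E, hx0b⟩ := hc b
      have hx0S : x0 ∈ S := mem_Sfin.mpr hx0E
      have hstep := step P hk1 hval hx0E
      apply ih (k + 1) (by omega) (Fin.snoc a x0) hstep.1
      have hsub : Sfin P (k + 1) (by omega) (Fin.snoc a x0)
          ⊆ (S.filter (fun x => f x = b)).erase x0 := by
        intro x hx
        obtain ⟨hxE, hxne, hxP⟩ := hstep.2 x (mem_Sfin.mp hx)
        exact Finset.mem_erase.mpr ⟨hxne,
          Finset.mem_filter.mpr ⟨mem_Sfin.mpr hxE, hxP.trans hx0b⟩⟩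
      have hx0C : x0 ∈ S.filter (fun x => f x = b) := Finset.mem_filter.mpr ⟨hx0S, hx0b⟩
      have h1 := Finset.card_le_card hsub
      rw [Finset.card_erase_of_mem hx0C] at h1
      have hpow : (2 : ℕ) ^ (m + 1 + 2) = 2 * 2 ^ (m + 2) := by ring
      have hpos : 4 ≤ (2 : ℕ) ^ (m + 2) := by
        calc (4 : ℕ) = 2 ^ 2 := rfl
        _ ≤ 2 ^ (m + 2) := Nat.pow_le_pow_right (by norm_num) (by omega)
      omega

end ShortChoiceAux

set_option maxHeartbeats 1000000 in
theorem shortChoice_total {n : ℕ} (hn : 2 ≤ n) {U : Type} [Fintype U]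
    (hU : Fintype.card U = 2 ^ n - 2)
    (P : ∀ i : Fin (n - 1), (Fin (i.1 + 1) → U) → U → Bool) :
    ∃ k : ℕ, ∃ hk : k ≤ n - 2, ∃ a : Fin (k + 1) → U, Function.Injective a ∧
      (∀ i j : Fin (k + 1), (hij : i.1 < j.1) →
        P ⟨i.1, by have := i.isLt; omega⟩
          (fun t => a ⟨t.1, by have h1 : (t : ℕ) < (i : ℕ) + 1 := t.isLt; have := i.isLt; omega⟩) (a j) =
        P ⟨i.1, by have := i.isLt; omega⟩
          (fun t => a ⟨t.1, by have h1 : (t : ℕ) < (i : ℕ) + 1 := t.isLt; have := i.isLt; omega⟩)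
          (a ⟨i.1 + 1, by have := j.isLt; omega⟩)) ∧
      ∃ c : Bool, ∀ x : U, (∀ i : Fin (k + 1), x ≠ a i) →
        (∀ i : Fin k,
          P ⟨i.1, by have := i.isLt; omega⟩
            (fun t => a ⟨t.1, by have h1 : (t : ℕ) < (i : ℕ) + 1 := t.isLt; have := i.isLt; omega⟩) x =
          P ⟨i.1, by have := i.isLt; omega⟩
            (fun t => a ⟨t.1, by have h1 : (t : ℕ) < (i : ℕ) + 1 := t.isLt; have := i.isLt; omega⟩)
            (a ⟨i.1 + 1, by have := i.isLt; omega⟩)) →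
        P ⟨k, by omega⟩ a x ≠ c := by
  have hpow : 4 ≤ 2 ^ n := by
    calc (4 : ℕ) = 2 ^ 2 := rfl
    _ ≤ 2 ^ n := Nat.pow_le_pow_right (by norm_num) hn
  have h0 : 0 < Fintype.card U := by omega
  obtain ⟨a0⟩ := Fintype.card_pos_iff.mp h0
  have hval : ShortChoiceAux.seqValid P 0 (by omega) (fun _ => a0) :=
    ⟨fun i j _ => by
       have hi := i.isLt; have hj := j.isLt; exact Fin.ext (by omega),
     fun i j hij => absurd hij (by have := j.isLt; omega)⟩
  have hcard : (ShortChoiceAux.Sfin P 0 (by omega) (fun _ => a0)).card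
      ≤ 2 ^ (n - 2 + 2) - 3 := by
    have hsub : ShortChoiceAux.Sfin P 0 (by omega) (fun _ => a0)
        ⊆ Finset.univ.erase a0 := by
      intro x hx
      exact Finset.mem_erase.mpr ⟨(ShortChoiceAux.mem_Sfin.mp hx).1 0, Finset.mem_univ x⟩
    have h1 := Finset.card_le_card hsub
    rw [Finset.card_erase_of_mem (Finset.mem_univ a0), Finset.card_univ, hU] at h1
    have h2 : 2 ^ (n - 2 + 2) = 2 ^ n := by congr 1; omega
    omega
  exact ShortChoiceAux.key hn hU P (n - 2) 0 (by omega) (fun _ => a0) hval hcard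
end
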